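/- Alon's bound: If a 3-uniform hypergraph H is not k-colorable (its weak chromatic number exceeds k), then H has at least c·k³ edges for some absolute constant c > 0. -/

import Mathlib

open Finset

/-- The number of colorings of `Fin n` by `Fin a` that are constant on a fixed
3-element set `e` is at most `a ^ (n - 2)`. -/
private lemma count_const_le (n a : ℕ) (e : Finset (Fin n)) (he : e.card = 3) :
    (Finset.univ.filter (fun f : Fin n → Fin a => ∀ u ∈ e, ∀ v ∈ e, f u = f v)).card
      ≤ a ^ (n - 2) := by
  obtain ⟨v₀, hv₀⟩ := Finset.card_pos.mp (by omega : 0 < e.card)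
  have hn3 : 3 ≤ n := by
    have h1 := Finset.card_le_univ e
    rw [he] at h1
    simpa using h1
  set T : Finset (Fin n) := insert v₀ eᶜ with hT
  have hTcard : T.card = n - 2 := by
    have hv₀c : v₀ ∉ eᶜ := by simp [hv₀]
    rw [hT, Finset.card_insert_of_notMem hv₀c, Finset.card_compl, he]
    simp
    omega
  have hinj : Set.InjOn (fun (f : Fin n → Fin a) => (fun x : ↥T => f x.1))
      ↑(Finset.univ.filter (fun f : Fin n → Fin a => ∀ u ∈ e, ∀ v ∈ e, f u = f v)) := by
    intro f hf g hg hfg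
    simp only [Finset.coe_filter, Set.mem_setOf_eq] at hf hg
    funext x
    by_cases hx : x ∈ e
    · have h1 : f x = f v₀ := hf.2 x hx v₀ hv₀
      have h2 : g x = g v₀ := hg.2 x hx v₀ hv₀
      have h3 : f v₀ = g v₀ := congrFun hfg ⟨v₀, Finset.mem_insert_self _ _⟩
      rw [h1, h3, ← h2]
    · exact congrFun hfg ⟨x, Finset.mem_insert_of_mem (Finset.mem_compl.mpr hx)⟩
  calc (Finset.univ.filter (fun f : Fin n → Fin a => ∀ u ∈ e, ∀ v ∈ e, f u = f v)).card
      ≤ (Finset.univ : Finset (↥T → Fin a)).card :=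
        Finset.card_le_card_of_injOn _ (fun _ _ => Finset.mem_univ _) hinj
    _ = a ^ (n - 2) := by
        rw [Finset.card_univ, Fintype.card_fun, Fintype.card_fin, Fintype.card_coe, hTcard]

/-- Key lemma: if a 3-uniform hypergraph has fewer than `k^3 / 162` edges (and `k ≥ 2`),
then it has a weak proper `k`-coloring. -/
private lemma key_colorable (n k : ℕ) (hk : 2 ≤ k) (E : Finset (Finset (Fin n)))
    (hcard : ∀ e ∈ E, e.card = 3) (hm : 162 * E.card < k ^ 3) :
    ∃ f : Fin n → Fin k, ∀ e ∈ E, ∃ u ∈ e, ∃ v ∈ e, f u ≠ f v := by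
  rcases E.eq_empty_or_nonempty with rfl | hne
  · exact ⟨fun _ => ⟨0, by omega⟩, by simp⟩
  obtain ⟨e₀, he₀⟩ := hne
  have hn3 : 3 ≤ n := by
    have h1 := Finset.card_le_univ e₀
    rw [hcard e₀ he₀] at h1
    simpa using h1
  set a := k / 2 with ha
  set b := k - a with hb
  have ha1 : 1 ≤ a := by omega
  have h3a : k ≤ 3 * a := by omega
  have h2b : k ≤ 2 * b := by omega
  have hab : a + b = k := by omega
  have h2n : 2 + (n - 2) = n := by omega
  -- Step 1: there is a coloring with `a` colors having few monochromatic edges.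
  have hC : ∃ f : Fin n → Fin a,
      a ^ 2 * (E.filter (fun e => ∀ u ∈ e, ∀ v ∈ e, f u = f v)).card ≤ E.card := by
    by_contra hc
    push_neg at hc
    have hsum : ∑ f : Fin n → Fin a,
        (E.filter (fun e => ∀ u ∈ e, ∀ v ∈ e, f u = f v)).card
        ≤ E.card * a ^ (n - 2) := by
      calc ∑ f : Fin n → Fin a, (E.filter (fun e => ∀ u ∈ e, ∀ v ∈ e, f u = f v)).card
          = ∑ f : Fin n → Fin a, ∑ e ∈ E, if (∀ u ∈ e, ∀ v ∈ e, f u = f v) then 1 else 0 :=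
            Finset.sum_congr rfl (fun f _ => Finset.card_filter _ _)
        _ = ∑ e ∈ E, ∑ f : Fin n → Fin a,
              if (∀ u ∈ e, ∀ v ∈ e, f u = f v) then 1 else 0 := Finset.sum_comm
        _ = ∑ e ∈ E, (Finset.univ.filter
              (fun f : Fin n → Fin a => ∀ u ∈ e, ∀ v ∈ e, f u = f v)).card :=
            Finset.sum_congr rfl (fun e _ => (Finset.card_filter _ _).symm)
        _ ≤ ∑ _e ∈ E, a ^ (n - 2) :=
            Finset.sum_le_sum (fun e he => count_const_le n a e (hcard e he))
        _ = E.card * a ^ (n - 2) := by rw [Finset.sum_const, smul_eq_mul]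
    have hN : Fintype.card (Fin n → Fin a) = a ^ n := by
      rw [Fintype.card_fun, Fintype.card_fin, Fintype.card_fin]
    have h2 : (E.card + 1) * a ^ n ≤
        ∑ f : Fin n → Fin a,
          a ^ 2 * (E.filter (fun e => ∀ u ∈ e, ∀ v ∈ e, f u = f v)).card := by
      calc (E.card + 1) * a ^ n = ∑ _f : Fin n → Fin a, (E.card + 1) := by
            rw [Finset.sum_const, Finset.card_univ, hN, smul_eq_mul, mul_comm]
        _ ≤ _ := Finset.sum_le_sum (fun f _ => hc f)
    have h3 : ∑ f : Fin n → Fin a,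
        a ^ 2 * (E.filter (fun e => ∀ u ∈ e, ∀ v ∈ e, f u = f v)).card
        ≤ E.card * a ^ n := by
      rw [← Finset.mul_sum]
      calc a ^ 2 * ∑ f : Fin n → Fin a,
            (E.filter (fun e => ∀ u ∈ e, ∀ v ∈ e, f u = f v)).card
          ≤ a ^ 2 * (E.card * a ^ (n - 2)) := Nat.mul_le_mul_left _ hsum
        _ = E.card * (a ^ 2 * a ^ (n - 2)) := by ring
        _ = E.card * a ^ n := by rw [← pow_add, h2n]
    have hpos : 0 < a ^ n := Nat.pow_pos ha1
    have := le_trans h2 h3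
    nlinarith
  obtain ⟨f, hf⟩ := hC
  set B := E.filter (fun e => ∀ u ∈ e, ∀ v ∈ e, f u = f v) with hBdef
  set S := B.biUnion id with hSdef
  -- Step 2: size bounds
  have hScard : S.card ≤ 3 * B.card := by
    calc S.card ≤ ∑ e ∈ B, (id e).card := Finset.card_biUnion_le
      _ = ∑ e ∈ B, 3 := Finset.sum_congr rfl (fun e heB => by
          simp only [id]
          exact hcard e (Finset.mem_filter.mp heB).1)
      _ = 3 * B.card := by rw [Finset.sum_const, smul_eq_mul, mul_comm]
  have hSb : S.card < b := by
    have hk3 : k ^ 3 ≤ 18 * a ^ 2 * b := by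
      calc k ^ 3 = k * k * k := by ring
        _ ≤ (3 * a) * (3 * a) * (2 * b) :=
          Nat.mul_le_mul (Nat.mul_le_mul h3a h3a) h2b
        _ = 18 * a ^ 2 * b := by ring
    have h162 : 162 * (a ^ 2 * B.card) < 18 * a ^ 2 * b :=
      lt_of_le_of_lt (Nat.mul_le_mul_left _ hf) (lt_of_lt_of_le hm hk3)
    have h9 : 9 * B.card < b := by nlinarith
    omega
  -- Step 3: injection from S into a fresh palette of b colors
  have hemb : Nonempty (↥S ↪ Fin b) := by
    apply Function.Embedding.nonempty_of_card_le
    rw [Fintype.card_coe, Fintype.card_fin]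
    omega
  obtain ⟨ι⟩ := hemb
  -- Step 4: final coloring
  refine ⟨fun v => if h : v ∈ S then
      (⟨a + (ι ⟨v, h⟩ : ℕ), by have := (ι ⟨v, h⟩).isLt; omega⟩ : Fin k)
    else ⟨(f v : ℕ), by have := (f v).isLt; omega⟩, ?_⟩
  intro e heE
  by_cases h1 : ∃ u ∈ e, u ∈ S
  · obtain ⟨u, hue, huS⟩ := h1
    by_cases h2 : ∃ w ∈ e, w ≠ u ∧ w ∈ S
    · obtain ⟨w, hwe, hwu, hwS⟩ := h2
      refine ⟨u, hue, w, hwe, ?_⟩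
      intro hg
      simp only [dif_pos huS, dif_pos hwS, Fin.mk.injEq] at hg
      have hval : (ι ⟨u, huS⟩ : ℕ) = (ι ⟨w, hwS⟩ : ℕ) := by omega
      have : (⟨u, huS⟩ : ↥S) = ⟨w, hwS⟩ := ι.injective (Fin.val_injective hval)
      exact hwu (congrArg Subtype.val this).symm
    · push_neg at h2
      obtain ⟨w, hwe, hwu⟩ :=
        Finset.exists_mem_ne (by rw [hcard e heE]; omega) u
      have hwS : w ∉ S := fun hw => (h2 w hwe hwu) hw
      refine ⟨u, hue, w, hwe, ?_⟩
      intro hg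
      simp only [dif_pos huS, dif_neg hwS, Fin.mk.injEq] at hg
      have := (f w).isLt
      omega
  · push_neg at h1
    have hnm : ¬ (∀ u ∈ e, ∀ v ∈ e, f u = f v) := by
      intro hmono
      have heB : e ∈ B := Finset.mem_filter.mpr ⟨heE, hmono⟩
      obtain ⟨u, hu⟩ := Finset.card_pos.mp (by rw [hcard e heE]; omega : 0 < e.card)
      exact h1 u hu (Finset.mem_biUnion.mpr ⟨e, heB, hu⟩)
    push_neg at hnm
    obtain ⟨u, hue, v, hve, hfuv⟩ := hnm
    refine ⟨u, hue, v, hve, ?_⟩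
    intro hg
    simp only [dif_neg (h1 u hue), dif_neg (h1 v hve), Fin.mk.injEq] at hg
    exact hfuv (Fin.val_injective hg)

/-- Alon's bound: there is an absolute constant `c > 0` such that any 3-uniform
hypergraph that admits no weak proper `k`-coloring (no edge monochromatic) has at
least `c * k³` edges. -/
theorem alon_bound :
    ∃ c : ℝ, 0 < c ∧
      ∀ (n k : ℕ) (E : Finset (Finset (Fin n))), (∀ e ∈ E, e.card = 3) →
        (¬ ∃ f : Fin n → Fin k, ∀ e ∈ E, ∃ u ∈ e, ∃ v ∈ e, f u ≠ f v) →
        c * (k : ℝ) ^ 3 ≤ E.card := by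
  refine ⟨1 / 162, by norm_num, ?_⟩
  intro n k E hcard hnc
  by_contra hlt
  push_neg at hlt
  have hnat : 162 * E.card < k ^ 3 := by
    have h1 : (162 : ℝ) * E.card < (k : ℝ) ^ 3 := by nlinarith [hlt]
    exact_mod_cast h1
  rcases Nat.lt_or_ge k 2 with hk2 | hk2
  · interval_cases k
    · -- k = 0 : then k^3 = 0 and hnat is absurd
      omega
    · -- k = 1 : E must be empty, so the constant coloring works
      have hE : E = ∅ := by
        rw [← Finset.card_eq_zero]
        omega
      exact hnc ⟨fun _ => ⟨0, by omega⟩, by simp [hE]⟩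
  · exact hnc (key_colorable n k hk2 E hcard hnat)
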